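/- Over Z/2, for every integer i ≥ 1, the cochain y(i) := Σ_{r=0}^{i−1} e_{2i−2r−1} ∧ e_{2i+2r+1} is a 2-cocycle of the complex C*(L_1), i.e., δ₁(y(i)) = 0. -/

import Mathlib

/-!
Every term of `y(i)` is `e_m e_n` with `m`, `n` odd and `m + n = 4i`. For odd `m`, `δ e_m` is
`Σ_{a+b=m, a<b} e_a e_b`, and over `Z/2` the `e`'s commute and square to zero, so `δ y(i)` is the
sum of `e_a e_b e_c` over the triples with `a + b + c = 4i`, `1 ≤ a < b` and `c` odd. Since `a + b`
is odd, exactly one of `a`, `b` is odd; exchanging it with `c` is an involution of these triples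
that preserves the monomial and whose fixed points have a repeated index, so everything cancels
in pairs.
-/

noncomputable section

/-- Ground field `Z/2`. -/
abbrev K2 := ZMod 2

/-- The free `Z/2`-module on basis `(e_i)_{i ≥ 1}`. -/
abbrev V1 := {i : ℕ // 1 ≤ i} →₀ K2

/-- The exterior algebra over `Z/2` on the space with basis `(e_i)_{i ≥ 1}`. -/
abbrev Lam1 := ExteriorAlgebra K2 V1

/-- The generator `e_i` (defined to be `0` for the irrelevant case `i = 0`). -/
noncomputable def E (i : ℕ) : Lam1 :=
  if h : 1 ≤ i then ExteriorAlgebra.ι K2 (Finsupp.single (⟨i, h⟩ : {i : ℕ // 1 ≤ i}) 1)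
  else 0

/-- The coboundary of a generator:
`δ₁(e_i) = Σ_{a+b=i, 1 ≤ a < b} (a+b) e_a ∧ e_b`, coefficients mod 2. -/
noncomputable def δE (i : ℕ) : Lam1 :=
  ∑ a ∈ Finset.Ico 1 i, if a < i - a then (i : K2) • (E a * E (i - a)) else 0

open Finset

section PairSums

variable {R : Type*} [Semiring R] {e : ℕ → R}

def pairSum (e : ℕ → R) (m : ℕ) : R :=
  ∑ a ∈ Ico 1 m with a < m - a, e a * e (m - a)

lemma commute_pairSum (he : ∀ a b, Commute (e a) (e b)) (c m : ℕ) :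
    Commute (e c) (pairSum e m) :=
  Commute.sum_right _ _ _ fun a _ => (he c a).mul_right (he c (m - a))

def oddTriples (N : ℕ) : Finset (ℕ × ℕ × ℕ) :=
  {t ∈ range N ×ˢ range N ×ˢ range N |
    t.1 + t.2.1 + t.2.2 = N ∧ 1 ≤ t.1 ∧ t.1 < t.2.1 ∧ Odd t.2.2}

lemma mem_oddTriples {N a b c : ℕ} :
    (a, b, c) ∈ oddTriples N ↔ a + b + c = N ∧ 1 ≤ a ∧ a < b ∧ c % 2 = 1 := by
  simp only [oddTriples, mem_filter, mem_product, mem_range, Nat.odd_iff]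
  omega

lemma sum_odd_pairSum_mul_eq_sum_oddTriples (e : ℕ → R) (N : ℕ) :
    ∑ c ∈ range N with Odd c, pairSum e (N - c) * e c
      = ∑ t ∈ oddTriples N, e t.1 * e t.2.1 * e t.2.2 := by
  simp only [pairSum, sum_mul, sum_sigma']
  refine sum_nbij' (fun p => (p.2, N - p.1 - p.2, p.1)) (fun t => ⟨t.2.2, t.1⟩)
    ?_ ?_ ?_ ?_ ?_
  · rintro ⟨c, a⟩ h
    simp only [mem_sigma, mem_filter, mem_range, mem_Ico, Nat.odd_iff] at h
    simp only [mem_oddTriples]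
    omega
  · rintro ⟨a, b, c⟩ h
    simp only [mem_oddTriples] at h
    simp only [mem_sigma, mem_filter, mem_range, mem_Ico, Nat.odd_iff]
    omega
  · rintro ⟨c, a⟩ _
    rfl
  · rintro ⟨a, b, c⟩ h
    simp only [mem_oddTriples] at h
    simp only [Prod.mk.injEq, true_and, and_true]
    omega
  · rintro ⟨c, a⟩ _
    simp only [Nat.sub_sub]

end PairSums

def oddSwap : ℕ × ℕ × ℕ → ℕ × ℕ × ℕ
  | (a, b, c) => if a % 2 = 1 then (min b c, max b c, a) else (min a c, max a c, b)

section OddSwap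

variable {N : ℕ} {t : ℕ × ℕ × ℕ}

lemma oddSwap_mem_oddTriples (hN : Even N) (ht : t ∈ oddTriples N) :
    oddSwap t ∈ oddTriples N := by
  obtain ⟨a, b, c⟩ := t
  rw [mem_oddTriples] at ht
  rw [Nat.even_iff] at hN
  simp only [oddSwap]
  split_ifs <;> rw [mem_oddTriples] <;> omega

lemma oddSwap_oddSwap (hN : Even N) (ht : t ∈ oddTriples N) : oddSwap (oddSwap t) = t := by
  obtain ⟨a, b, c⟩ := t
  rw [mem_oddTriples] at ht
  rw [Nat.even_iff] at hN
  simp only [oddSwap]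
  split_ifs <;> simp only [Prod.mk.injEq] <;> omega

end OddSwap

section CommutingSquareZero

variable {R : Type*} [Ring R] {e : ℕ → R}

lemma mul_mul_rotate_of_commute (he : ∀ a b, Commute (e a) (e b)) (a b c : ℕ) :
    e a * e b * e c = e b * e c * e a := by
  rw [mul_assoc, ((he a b).mul_right (he a c)).eq]

lemma mul_mul_swap_of_commute (he : ∀ a b, Commute (e a) (e b)) (a b c : ℕ) :
    e a * e b * e c = e b * e a * e c := by
  rw [(he a b).eq]

lemma mul_mul_oddSwap (he : ∀ a b, Commute (e a) (e b)) (t : ℕ × ℕ × ℕ) :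
    e (oddSwap t).1 * e (oddSwap t).2.1 * e (oddSwap t).2.2 = e t.1 * e t.2.1 * e t.2.2 := by
  have rot := mul_mul_rotate_of_commute he
  have swap := mul_mul_swap_of_commute he
  obtain ⟨a, b, c⟩ := t
  simp only [oddSwap]
  split_ifs <;> dsimp only
  · rcases le_total b c with h | h
    · rw [min_eq_left h, max_eq_right h, rot a b c]
    · rw [min_eq_right h, max_eq_left h, rot a b c, swap b c a]
  · rcases le_total a c with h | h
    · rw [min_eq_left h, max_eq_right h, rot a c b, rot a b c, swap b c a]
    · rw [min_eq_right h, max_eq_left h, rot a b c, rot b c a]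

lemma mul_mul_eq_zero_of_oddSwap_eq (he : ∀ a b, Commute (e a) (e b)) (he0 : ∀ a, e a * e a = 0)
    {t : ℕ × ℕ × ℕ} (h : oddSwap t = t) : e t.1 * e t.2.1 * e t.2.2 = 0 := by
  obtain ⟨a, b, c⟩ := t
  simp only [oddSwap] at h
  split_ifs at h <;> simp only [Prod.mk.injEq] at h <;> dsimp only
  · obtain rfl : a = c := h.2.2
    rw [mul_mul_rotate_of_commute he, mul_assoc, he0, mul_zero]
  · obtain rfl : b = c := h.2.2
    rw [mul_assoc, he0, mul_zero]

theorem sum_oddTriples_eq_zero [CharP R 2] (he : ∀ a b, Commute (e a) (e b))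
    (he0 : ∀ a, e a * e a = 0) {N : ℕ} (hN : Even N) :
    ∑ t ∈ oddTriples N, e t.1 * e t.2.1 * e t.2.2 = 0 :=
  sum_involution (fun t _ => oddSwap t)
    (fun t _ => by rw [mul_mul_oddSwap he, CharTwo.add_self_eq_zero])
    (fun _ _ hne hfix => hne (mul_mul_eq_zero_of_oddSwap_eq he he0 hfix))
    (fun _ => oddSwap_mem_oddTriples hN) (fun _ => oddSwap_oddSwap hN)

end CommutingSquareZero

lemma sum_range_reflect_add_eq_sum_odd {M : Type*} [AddCommMonoid M] (G : ℕ → M) (i : ℕ) :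
    ∑ r ∈ range i, (G (2 * i - 2 * r - 1) + G (2 * i + 2 * r + 1))
      = ∑ c ∈ range (4 * i) with Odd c, G c := by
  rw [sum_add_distrib, ← sum_filter_add_sum_filter_not {c ∈ range (4 * i) | Odd c} (· < 2 * i)]
  congr 1
  · refine sum_nbij' (fun r => 2 * i - 2 * r - 1) (fun c => (2 * i - 1 - c) / 2)
      ?_ ?_ ?_ ?_ fun _ _ => rfl <;>
    · intro _ h
      simp only [mem_filter, mem_range, Nat.odd_iff] at h ⊢
      omega
  · refine sum_nbij' (fun r => 2 * i + 2 * r + 1) (fun c => (c - 2 * i - 1) / 2)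
      ?_ ?_ ?_ ?_ fun _ _ => rfl <;>
    · intro _ h
      simp only [mem_filter, mem_range, Nat.odd_iff] at h ⊢
      omega

namespace ExteriorAlgebra

variable {R M : Type*} [CommRing R] [AddCommGroup M] [Module R M]

instance instCharP (p : ℕ) [CharP R p] : CharP (ExteriorAlgebra R M) p :=
  charP_of_injective_algebraMap (algebraMap_leftInverse M).injective p

lemma commute_ι_of_charP_two [CharP R 2] (x y : M) : Commute (ι R x) (ι R y) := by
  rw [Commute, SemiconjBy, eq_neg_of_add_eq_zero_left (ι_add_mul_swap x y), CharTwo.neg_eq]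

end ExteriorAlgebra

lemma E_mul_self (a : ℕ) : E a * E a = 0 := by
  unfold E
  split_ifs
  · exact ExteriorAlgebra.ι_sq_zero _
  · exact mul_zero 0

lemma commute_E (a b : ℕ) : Commute (E a) (E b) := by
  unfold E
  split_ifs
  · exact ExteriorAlgebra.commute_ι_of_charP_two _ _
  all_goals simp

lemma δE_eq_pairSum {m : ℕ} (hm : Odd m) : δE m = pairSum E m := by
  rw [δE, pairSum, sum_filter]
  refine sum_congr rfl fun a _ => ?_
  rw [hm.natCast_zmod_two, one_smul]

theorem y_is_cocycle_general (i : ℕ) :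
    (∑ r ∈ Finset.range i,
      (δE (2 * i - 2 * r - 1) * E (2 * i + 2 * r + 1)
        + E (2 * i - 2 * r - 1) * δE (2 * i + 2 * r + 1))) = 0 := by
  set G : ℕ → Lam1 := fun c => pairSum E (4 * i - c) * E c
  have hterm : ∀ r ∈ range i, δE (2 * i - 2 * r - 1) * E (2 * i + 2 * r + 1)
      + E (2 * i - 2 * r - 1) * δE (2 * i + 2 * r + 1)
      = G (2 * i - 2 * r - 1) + G (2 * i + 2 * r + 1) := by
    intro r hr
    rw [mem_range] at hr
    rw [δE_eq_pairSum (by rw [Nat.odd_iff]; omega), δE_eq_pairSum (by rw [Nat.odd_iff]; omega),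
      (commute_pairSum commute_E _ _).eq, add_comm]
    simp only [G, show 4 * i - (2 * i - 2 * r - 1) = 2 * i + 2 * r + 1 by omega,
      show 4 * i - (2 * i + 2 * r + 1) = 2 * i - 2 * r - 1 by omega]
  rw [sum_congr rfl hterm, sum_range_reflect_add_eq_sum_odd,
    sum_odd_pairSum_mul_eq_sum_oddTriples]
  exact sum_oddTriples_eq_zero commute_E E_mul_self (by rw [Nat.even_iff]; omega)

/-- over `Z/2`, for `i ≥ 1`, the 2-cochain
`y(i) = Σ_{r=0}^{i−1} e_{2i−2r−1} ∧ e_{2i+2r+1}` is a cocycle: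
its coboundary (computed by the Leibniz rule) vanishes. -/
theorem y_is_cocycle (i : ℕ) (hi : 1 ≤ i) :
    (∑ r ∈ Finset.range i,
      (δE (2 * i - 2 * r - 1) * E (2 * i + 2 * r + 1)
        + E (2 * i - 2 * r - 1) * δE (2 * i + 2 * r + 1))) = 0 :=
  y_is_cocycle_general i
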